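/- arXiv:1807.03525 — 2 statements merged into one kernel-verified Lean document; each statement's English description precedes it below -/
import Mathlib

section
/- If n ≥ 5 and n ≡ 0 or 16 (mod 31), then the largest minimum weight d(n,5) among all binary LCD [n,5] codes satisfies d(n,5) = ⌊16n/31⌋, ⌊16n/31⌋ − 1 or ⌊16n/31⌋ − 2. -/
/-
Upper bound (Plotkin): in a binary `[n, k]` code, a coordinate that does not vanish on the whole
code equals `1` on exactly half of the `2 ^ k` codewords, so the `2 ^ k - 1` nonzero codewords have
total weight at most `2 ^ (k - 1) * n`; for `k = 5` the minimum weight is at most `16 n / 31`.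

Lower bound: by Massey's criterion, `G` generates an LCD code iff `G * Gᵀ` is nonsingular. The
simplex code, whose columns are all nonzero vectors of `F_2^k`, is self-orthogonal for `k ≥ 3` and
has all nonzero weights equal to `2 ^ (k - 1)`. Prepending `s` copies of it to a generator matrix
`G` leaves `G * Gᵀ` unchanged and adds `s * 2 ^ (k - 1)` to every weight. Starting from LCD codes
`[31, 5, 14]` and `[16, 5, 6]` (given by generator matrices with `G * Gᵀ = 1`) this yields LCD codes
of lengths `31 s + 31` and `31 s + 16` with minimum weights `16 s + 14` and `16 s + 6`, that is
`⌊16 n / 31⌋ - 2`.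
-/

/-- The (Hamming) weight of a vector over `F_2`. -/
def wt {n : ℕ} (x : Fin n → ZMod 2) : ℕ :=
  Finset.card (Finset.univ.filter fun i => x i ≠ 0)

/-- The dual code of a binary code `C`, with respect to the standard inner product. -/
def dualCode {n : ℕ} (C : Submodule (ZMod 2) (Fin n → ZMod 2)) :
    Submodule (ZMod 2) (Fin n → ZMod 2) where
  carrier := {x | ∀ y ∈ C, ∑ i, x i * y i = 0}
  add_mem' := by
    intro a b ha hb y hy
    simp [Pi.add_apply, add_mul, Finset.sum_add_distrib, ha y hy, hb y hy]
  zero_mem' := by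
    intro y hy
    simp
  smul_mem' := by
    intro c a ha y hy
    simp only [Pi.smul_apply, smul_eq_mul, mul_assoc, ← Finset.mul_sum, ha y hy, mul_zero]

/-- A binary code is linear complementary dual (LCD) if it meets its dual trivially. -/
def IsLCD {n : ℕ} (C : Submodule (ZMod 2) (Fin n → ZMod 2)) : Prop :=
  C ⊓ dualCode C = ⊥

/-- The minimum weight of a binary code: the smallest weight of a nonzero codeword. -/
noncomputable def minWt {n : ℕ} (C : Submodule (ZMod 2) (Fin n → ZMod 2)) : ℕ :=
  sInf {w | ∃ x ∈ C, x ≠ 0 ∧ wt x = w}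

/-- `dLCD n k` is the largest minimum weight among all binary LCD `[n,k]` codes. -/
noncomputable def dLCD (n k : ℕ) : ℕ :=
  sSup {d | ∃ C : Submodule (ZMod 2) (Fin n → ZMod 2),
    Module.finrank (ZMod 2) C = k ∧ IsLCD C ∧ minWt C = d}

open Matrix Finset

section HammingNorm

variable {ι κ β : Type*} [Fintype ι] [Fintype κ] [Zero β] [DecidableEq β]

lemma hammingNorm_comp_equiv (x : ι → β) (e : κ ≃ ι) : hammingNorm (x ∘ e) = hammingNorm x := by
  simp only [hammingNorm, card_filter, Function.comp_apply,
    e.sum_comp (fun i => if x i ≠ 0 then 1 else 0)]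

lemma hammingNorm_sumElim (x : ι → β) (y : κ → β) :
    hammingNorm (Sum.elim x y) = hammingNorm x + hammingNorm y := by
  simp only [hammingNorm, card_filter, Fintype.sum_sum_type, Sum.elim_inl, Sum.elim_inr]
  rfl

end HammingNorm

section MinimumWeight

variable {n : ℕ} {C : Submodule (ZMod 2) (Fin n → ZMod 2)}

lemma minWt_le_wt {x : Fin n → ZMod 2} (hx : x ∈ C) (hx0 : x ≠ 0) : minWt C ≤ wt x :=
  Nat.sInf_le ⟨x, hx, hx0, rfl⟩

lemma le_minWt {d : ℕ} (hC : C ≠ ⊥) (h : ∀ x ∈ C, x ≠ 0 → d ≤ wt x) : d ≤ minWt C := by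
  obtain ⟨x, hx, hx0⟩ := (Submodule.ne_bot_iff C).1 hC
  exact le_csInf ⟨_, x, hx, hx0, rfl⟩ (by rintro _ ⟨x, hx, hx0, rfl⟩; exact h x hx hx0)

lemma minWt_le_length (C : Submodule (ZMod 2) (Fin n → ZMod 2)) : minWt C ≤ n := by
  obtain rfl | hC := eq_or_ne C ⊥
  · simp [minWt]
  · obtain ⟨x, hx, hx0⟩ := (Submodule.ne_bot_iff C).1 hC
    exact (minWt_le_wt hx hx0).trans (hammingNorm_le_card_fintype.trans_eq (Fintype.card_fin n))

lemma minWt_le_dLCD (hC : IsLCD C) : minWt C ≤ dLCD n (Module.finrank (ZMod 2) C) :=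
  le_csSup ⟨n, by rintro _ ⟨C', -, -, rfl⟩; exact minWt_le_length C'⟩ ⟨C, rfl, hC, rfl⟩

lemma dLCD_le {k b : ℕ}
    (h : ∀ C : Submodule (ZMod 2) (Fin n → ZMod 2),
      Module.finrank (ZMod 2) C = k → IsLCD C → minWt C ≤ b) :
    dLCD n k ≤ b :=
  csSup_le' <| by rintro _ ⟨C, hk, hC, rfl⟩; exact h C hk hC

end MinimumWeight

section Plotkin

variable {n : ℕ} (C : Submodule (ZMod 2) (Fin n → ZMod 2)) [Fintype C]

/-- Translating by a codeword `x₀` with `x₀ i = 1` maps the codewords with `x i = 1` injectively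
to those with `x i = 0`. -/
lemma two_mul_card_coord_ne_zero_le (i : Fin n) :
    2 * #{x : C | (x : Fin n → ZMod 2) i ≠ 0} ≤ Fintype.card C := by
  by_cases h : ∃ x₀ : C, (x₀ : Fin n → ZMod 2) i ≠ 0
  · obtain ⟨x₀, hx₀⟩ := h
    have hone_add_one : ∀ a b : ZMod 2, a ≠ 0 → b ≠ 0 → a + b = 0 := by decide
    have hle : #{x : C | (x : Fin n → ZMod 2) i ≠ 0} ≤ #{x : C | ¬(x : Fin n → ZMod 2) i ≠ 0} := by
      refine card_le_card_of_injOn (· + x₀) (fun x hx => ?_) (add_left_injective x₀).injOn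
      simp only [coe_filter, mem_univ, true_and, Set.mem_ofPred_eq, not_not, Submodule.coe_add,
        Pi.add_apply] at hx ⊢
      exact hone_add_one _ _ hx hx₀
    have htotal := card_filter_add_card_filter_not (s := (univ : Finset C))
      fun x => (x : Fin n → ZMod 2) i ≠ 0
    rw [card_univ] at htotal
    omega
  · push Not at h
    simp [h]

lemma sum_wt_eq_sum_card_coord_ne_zero :
    ∑ x : C, wt (x : Fin n → ZMod 2) = ∑ i, #{x : C | (x : Fin n → ZMod 2) i ≠ 0} := by
  simp only [wt, card_filter]
  exact sum_comm

lemma two_mul_sum_wt_le : 2 * ∑ x : C, wt (x : Fin n → ZMod 2) ≤ n * Fintype.card C := by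
  rw [sum_wt_eq_sum_card_coord_ne_zero, mul_sum]
  calc ∑ i, 2 * #{x : C | (x : Fin n → ZMod 2) i ≠ 0} ≤ ∑ _i : Fin n, Fintype.card C :=
        sum_le_sum fun i _ => two_mul_card_coord_ne_zero_le C i
    _ = n * Fintype.card C := by simp

lemma card_sub_one_mul_minWt_le_sum_wt :
    (Fintype.card C - 1) * minWt C ≤ ∑ x : C, wt (x : Fin n → ZMod 2) :=
  calc (Fintype.card C - 1) * minWt C = ∑ _x ∈ (univ : Finset C).erase 0, minWt C := by
        rw [sum_const, card_erase_of_mem (mem_univ _), card_univ, smul_eq_mul]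
    _ ≤ ∑ x ∈ (univ : Finset C).erase 0, wt (x : Fin n → ZMod 2) :=
        sum_le_sum fun x hx => minWt_le_wt x.2 (by simpa using ne_of_mem_erase hx)
    _ ≤ ∑ x : C, wt (x : Fin n → ZMod 2) := sum_le_sum_of_subset (erase_subset _ _)

end Plotkin

theorem two_mul_two_pow_sub_one_mul_minWt_le {n k : ℕ} (C : Submodule (ZMod 2) (Fin n → ZMod 2))
    (hC : Module.finrank (ZMod 2) C = k) : 2 * (2 ^ k - 1) * minWt C ≤ n * 2 ^ k := by
  classical
  have hcard : Fintype.card C = 2 ^ k := by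
    rw [Module.card_eq_pow_finrank (K := ZMod 2), ZMod.card, hC]
  calc 2 * (2 ^ k - 1) * minWt C = 2 * ((Fintype.card C - 1) * minWt C) := by
        rw [hcard, mul_assoc]
    _ ≤ 2 * ∑ x : C, wt (x : Fin n → ZMod 2) := by
        gcongr; exact card_sub_one_mul_minWt_le_sum_wt C
    _ ≤ n * 2 ^ k := hcard ▸ two_mul_sum_wt_le C

section Simplex

variable {k : ℕ}

def simplexMatrix (k : ℕ) : Matrix (Fin k) {c : Fin k → ZMod 2 // c ≠ 0} (ZMod 2) :=
  fun i c => c.1 i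

lemma card_nonzero_vectors (k : ℕ) :
    Fintype.card {c : Fin k → ZMod 2 // c ≠ 0} = 2 ^ k - 1 := by
  rw [Fintype.card_subtype_compl, Fintype.card_subtype_eq, Fintype.card_fun, ZMod.card,
    Fintype.card_fin]

lemma sum_subtype_ne_zero {M : Type*} [AddCommMonoid M] (f : (Fin k → ZMod 2) → M)
    (hf : f 0 = 0) : ∑ c : {c : Fin k → ZMod 2 // c ≠ 0}, f c = ∑ c, f c := by
  rw [← sum_subtype {c | c ≠ 0} (by simp)]
  exact sum_filter_of_ne fun c _ hc h => hc (h ▸ hf)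

/-- Translation by a unit vector `e_l` with `l ∉ {i, j}` pairs up the terms. -/
lemma sum_mul_apply_eq_zero (hk : 3 ≤ k) (i j : Fin k) :
    ∑ c : Fin k → ZMod 2, c i * c j = 0 := by
  obtain ⟨l, hli, hlj⟩ : ∃ l : Fin k, l ≠ i ∧ l ≠ j := by
    by_contra! h
    have h0 := h ⟨0, by omega⟩
    have h1 := h ⟨1, by omega⟩
    have h2 := h ⟨2, by omega⟩
    simp only [ne_eq, Fin.ext_iff] at h0 h1 h2
    omega
  refine sum_involution (fun c _ => c + Pi.single l 1) (fun c _ => ?_) (fun c _ _ => ?_)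
    (fun _ _ => mem_univ _) (fun c _ => ?_)
  · simp [hli.symm, hlj.symm, CharTwo.add_self_eq_zero]
  · simp
  · simp [add_assoc, ← Pi.single_add, CharTwo.add_self_eq_zero]

lemma simplexMatrix_mul_transpose (hk : 3 ≤ k) : simplexMatrix k * (simplexMatrix k)ᵀ = 0 := by
  ext i j
  rw [mul_apply, Matrix.zero_apply]
  exact (sum_subtype_ne_zero (fun c => c i * c j) (by simp)).trans (sum_mul_apply_eq_zero hk i j)

/-- If `u l ≠ 0`, translation by `e_l` swaps the vectors `c` with `u ⬝ᵥ c = 0` and those with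
`u ⬝ᵥ c = 1`. -/
lemma two_mul_card_dotProduct_ne_zero {u : Fin k → ZMod 2} (hu : u ≠ 0) :
    2 * #{c : Fin k → ZMod 2 | u ⬝ᵥ c ≠ 0} = 2 ^ k := by
  obtain ⟨l, hl⟩ : ∃ l, u l ≠ 0 := Function.ne_iff.mp hu
  have hshift : ∀ c, u ⬝ᵥ (c + Pi.single l 1) = u ⬝ᵥ c + 1 := by
    have hone : ∀ a : ZMod 2, a ≠ 0 → a = 1 := by decide
    intro c
    rw [dotProduct_add, dotProduct_single, mul_one, hone _ hl]
  have hflip : ∀ a : ZMod 2, a + 1 ≠ 0 ↔ ¬a ≠ 0 := by decide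
  have hinv : ∀ c : Fin k → ZMod 2, c + Pi.single l 1 + Pi.single l 1 = c := by
    simp [add_assoc, ← Pi.single_add, CharTwo.add_self_eq_zero]
  have hswap : #{c | u ⬝ᵥ c ≠ 0} = #{c | ¬u ⬝ᵥ c ≠ 0} := by
    refine card_nbij' (· + Pi.single l 1) (· + Pi.single l 1) ?_ ?_ ?_ ?_ <;> intro c <;>
      simp only [coe_filter, mem_univ, true_and, Set.mem_ofPred_eq, hshift, hflip, hinv] <;> tauto
  have htotal := card_filter_add_card_filter_not (s := univ) fun c : Fin k → ZMod 2 => u ⬝ᵥ c ≠ 0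
  rw [card_univ, Fintype.card_fun, ZMod.card, Fintype.card_fin] at htotal
  omega

lemma hammingNorm_vecMul_simplexMatrix {u : Fin k → ZMod 2} (hu : u ≠ 0) :
    hammingNorm (u ᵥ* simplexMatrix k) = 2 ^ (k - 1) := by
  have hcard : hammingNorm (u ᵥ* simplexMatrix k) = #{c : Fin k → ZMod 2 | u ⬝ᵥ c ≠ 0} := by
    simp only [hammingNorm, card_filter]
    exact sum_subtype_ne_zero (fun c => if u ⬝ᵥ c ≠ 0 then 1 else 0) (by simp)
  obtain ⟨k, rfl⟩ : ∃ m, k = m + 1 := Nat.exists_eq_succ_of_ne_zero <| by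
    rintro rfl; exact hu (Subsingleton.elim _ _)
  have := two_mul_card_dotProduct_ne_zero hu
  rw [pow_succ] at this
  rw [hcard, Nat.add_sub_cancel]
  omega

end Simplex

/-- `G` generates an LCD code of minimum weight at least `d`; the condition on `G * Gᵀ` is
Massey's criterion for LCD codes. -/
structure IsLCDGenerator {k : ℕ} {ι : Type*} [Fintype ι] (G : Matrix (Fin k) ι (ZMod 2)) (d : ℕ) :
    Prop where
  det_mul_transpose_ne_zero : (G * Gᵀ).det ≠ 0
  le_hammingNorm : ∀ u ≠ 0, d ≤ hammingNorm (u ᵥ* G)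

namespace IsLCDGenerator

variable {k n d : ℕ}

lemma vecMul_injective {ι : Type*} [Fintype ι] {G : Matrix (Fin k) ι (ZMod 2)}
    (hG : IsLCDGenerator G d) : Function.Injective (· ᵥ* G) := by
  intro u v huv
  rw [← sub_eq_zero]
  refine eq_zero_of_vecMul_eq_zero hG.det_mul_transpose_ne_zero ?_
  rw [← vecMul_vecMul, sub_vecMul, sub_eq_zero.mpr huv, zero_vecMul]

lemma isLCD_range {G : Matrix (Fin k) (Fin n) (ZMod 2)} (hG : IsLCDGenerator G d) :
    IsLCD (LinearMap.range G.vecMulLinear) := by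
  rw [IsLCD, Submodule.eq_bot_iff]
  rintro x ⟨⟨u, rfl⟩, hx⟩
  have hGx : G *ᵥ (u ᵥ* G) = 0 := dotProduct_eq_zero _ fun w => by
    rw [dotProduct_comm, dotProduct_mulVec, dotProduct_comm]
    exact hx _ ⟨w, rfl⟩
  rw [← mulVec_transpose, mulVec_mulVec] at hGx
  simp [eq_zero_of_mulVec_eq_zero hG.det_mul_transpose_ne_zero hGx]

lemma le_dLCD_of_fin {G : Matrix (Fin k) (Fin n) (ZMod 2)} (hG : IsLCDGenerator G d) (hk : k ≠ 0) :
    d ≤ dLCD n k := by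
  have hrank : Module.finrank (ZMod 2) (LinearMap.range G.vecMulLinear) = k := by
    rw [LinearMap.finrank_range_of_inj hG.vecMul_injective, Module.finrank_fin_fun]
  refine le_trans ?_ (hrank ▸ minWt_le_dLCD hG.isLCD_range)
  refine le_minWt (fun hbot => hk ?_) ?_
  · rw [← hrank, hbot, finrank_bot]
  · rintro _ ⟨u, rfl⟩ hx
    exact hG.le_hammingNorm u (by rintro rfl; exact hx (by simp))

lemma submatrix_equiv {ι κ : Type*} [Fintype ι] [Fintype κ] {G : Matrix (Fin k) ι (ZMod 2)}
    (hG : IsLCDGenerator G d) (e : κ ≃ ι) : IsLCDGenerator (G.submatrix id e) d where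
  det_mul_transpose_ne_zero := by
    rw [transpose_submatrix, submatrix_mul_equiv, submatrix_id_id]
    exact hG.det_mul_transpose_ne_zero
  le_hammingNorm u hu := (hG.le_hammingNorm u hu).trans_eq (hammingNorm_comp_equiv _ e).symm

lemma le_dLCD {ι : Type*} [Fintype ι] {G : Matrix (Fin k) ι (ZMod 2)} (hG : IsLCDGenerator G d)
    (hk : k ≠ 0) : d ≤ dLCD (Fintype.card ι) k :=
  (hG.submatrix_equiv (Fintype.equivFin ι).symm).le_dLCD_of_fin hk

lemma fromCols_simplexMatrix {ι : Type*} [Fintype ι] {G : Matrix (Fin k) ι (ZMod 2)} (hk : 3 ≤ k)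
    (hG : IsLCDGenerator G d) :
    IsLCDGenerator (fromCols (simplexMatrix k) G) (2 ^ (k - 1) + d) where
  det_mul_transpose_ne_zero := by
    rw [transpose_fromCols, fromCols_mul_fromRows, simplexMatrix_mul_transpose hk, zero_add]
    exact hG.det_mul_transpose_ne_zero
  le_hammingNorm u hu := by
    rw [vecMul_fromCols, hammingNorm_sumElim, hammingNorm_vecMul_simplexMatrix hu]
    exact Nat.add_le_add_left (hG.le_hammingNorm u hu) _

lemma add_le_dLCD {ι : Type*} [Fintype ι] {G : Matrix (Fin k) ι (ZMod 2)} (hk : 3 ≤ k)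
    (hG : IsLCDGenerator G d) (s : ℕ) :
    s * 2 ^ (k - 1) + d ≤ dLCD (s * (2 ^ k - 1) + Fintype.card ι) k := by
  induction s generalizing ι d with
  | zero => simpa using hG.le_dLCD (by omega)
  | succ s ih =>
    have h := ih (hG.fromCols_simplexMatrix hk)
    rw [Fintype.card_sum, card_nonzero_vectors] at h
    rwa [add_one_mul, add_one_mul, add_assoc, add_assoc]

end IsLCDGenerator

def lcdGenerator16 : Matrix (Fin 5) (Fin 16) (ZMod 2) :=
  !![0, 0, 1, 0, 1, 0, 0, 1, 0, 1, 0, 1, 0, 1, 1, 0;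
    0, 1, 1, 0, 1, 1, 0, 0, 0, 0, 0, 1, 0, 1, 0, 1;
    1, 0, 1, 0, 0, 0, 0, 1, 1, 1, 1, 1, 0, 0, 0, 0;
    1, 0, 1, 0, 1, 1, 1, 1, 0, 1, 0, 0, 1, 0, 0, 1;
    1, 1, 1, 1, 0, 1, 1, 1, 1, 0, 0, 0, 1, 1, 1, 0]

def lcdGenerator31 : Matrix (Fin 5) (Fin 31) (ZMod 2) :=
  !![0, 0, 0, 1, 1, 0, 1, 1, 0, 1, 1, 1, 0, 0, 1, 1, 1, 0, 0, 0, 1, 1, 1, 0, 1, 0, 0, 0, 1, 1, 1;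
    0, 1, 0, 1, 1, 0, 0, 0, 1, 1, 1, 1, 1, 0, 0, 1, 0, 1, 1, 1, 0, 1, 0, 0, 1, 0, 0, 1, 1, 1, 0;
    0, 1, 1, 0, 1, 1, 1, 0, 1, 1, 1, 0, 0, 1, 0, 1, 1, 0, 0, 0, 1, 1, 0, 1, 0, 0, 0, 1, 0, 0, 0;
    1, 0, 0, 1, 0, 1, 1, 1, 0, 0, 0, 0, 0, 1, 0, 1, 0, 0, 1, 0, 1, 1, 1, 1, 0, 1, 0, 1, 1, 0, 0;
    1, 1, 0, 1, 0, 1, 1, 0, 0, 1, 0, 0, 0, 0, 1, 0, 0, 1, 0, 0, 1, 1, 0, 1, 1, 0, 1, 1, 0, 1, 0]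

lemma lcdGenerator16_mul_transpose : lcdGenerator16 * lcdGenerator16ᵀ = 1 := by decide

lemma lcdGenerator31_mul_transpose : lcdGenerator31 * lcdGenerator31ᵀ = 1 := by decide

lemma isLCDGenerator_lcdGenerator16 : IsLCDGenerator lcdGenerator16 6 where
  det_mul_transpose_ne_zero := by simp [lcdGenerator16_mul_transpose]
  le_hammingNorm := by decide

lemma isLCDGenerator_lcdGenerator31 : IsLCDGenerator lcdGenerator31 14 where
  det_mul_transpose_ne_zero := by simp [lcdGenerator31_mul_transpose]
  le_hammingNorm := by decide

theorem lcd_dim5_threeValues (n : ℕ) (hn : 5 ≤ n) (h : n % 31 = 0 ∨ n % 31 = 16) :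
    dLCD n 5 = 16 * n / 31 ∨ dLCD n 5 = 16 * n / 31 - 1 ∨ dLCD n 5 = 16 * n / 31 - 2 := by
  have hupper : dLCD n 5 ≤ 16 * n / 31 := dLCD_le fun C hC _ => by
    have := two_mul_two_pow_sub_one_mul_minWt_le C hC
    omega
  have hlower : 16 * n / 31 - 2 ≤ dLCD n 5 := by
    rcases h with h | h
    · have hs := isLCDGenerator_lcdGenerator31.add_le_dLCD (by norm_num) (n / 31 - 1)
      rw [Fintype.card_fin, show (n / 31 - 1) * (2 ^ 5 - 1) + 31 = n by omega] at hs
      omega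
    · have hs := isLCDGenerator_lcdGenerator16.add_le_dLCD (by norm_num) (n / 31)
      rw [Fintype.card_fin, show n / 31 * (2 ^ 5 - 1) + 16 = n by omega] at hs
      omega
  omega
end

section
/- For every integer t ≥ 0 there exists a binary LCD [15t+6, 4, 8t+2] code, i.e., a 4-dimensional linear complementary dual subspace of F_2^(15t+6) with minimum weight 8t+2. -/
/-!
Take the generator matrix `[S | S | ⋯ | S | B]` with `t` copies of the `4 × 15` simplex matrix `S`
and a `4 × 6` matrix `B` with `B Bᵀ` nonsingular and minimum weight `2`. Since `S Sᵀ = 0`, the Gram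
matrix of the concatenation is `B Bᵀ`, so the code is LCD by Massey's criterion; and since every
nonzero codeword of the simplex code has weight `8`, the codeword of `v ≠ 0` has weight
`8t + wt (v B) ≥ 8t + 2`, with equality for a suitable `v`.
-/

open Matrix

theorem Fin.sum_modNat {M : Type*} [AddCommMonoid M] {m n : ℕ} (f : Fin n → M) :
    ∑ i : Fin (m * n), f i.modNat = m • ∑ j, f j := by
  rw [← finProdFinEquiv.sum_comp, Fintype.sum_prod_type]
  simp [finProdFinEquiv, Fin.modNat, Nat.mod_eq_of_lt]

section Weight

variable {m n : ℕ}

theorem wt_eq_sum (x : Fin n → ZMod 2) : wt x = ∑ i, if x i ≠ 0 then 1 else 0 :=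
  Finset.card_filter _ _

theorem wt_append (x : Fin m → ZMod 2) (y : Fin n → ZMod 2) :
    wt (Fin.append x y) = wt x + wt y := by
  simp only [wt_eq_sum, Fin.sum_univ_add, Fin.append_left, Fin.append_right]

theorem wt_repeat (t : ℕ) (x : Fin n → ZMod 2) : wt (Fin.repeat t x) = t * wt x := by
  simp only [wt_eq_sum, Fin.repeat_apply]
  exact Fin.sum_modNat fun j => if x j ≠ 0 then 1 else 0

end Weight

section Concatenation

variable {R : Type*} [CommSemiring R] {k m n : ℕ}

theorem dotProduct_append (x x' : Fin m → R) (y y' : Fin n → R) :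
    Fin.append x y ⬝ᵥ Fin.append x' y' = x ⬝ᵥ x' + y ⬝ᵥ y' := by
  simp only [dotProduct, Fin.sum_univ_add, Fin.append_left, Fin.append_right]

theorem dotProduct_repeat (t : ℕ) (x y : Fin n → R) :
    Fin.repeat t x ⬝ᵥ Fin.repeat t y = t • (x ⬝ᵥ y) := by
  simp only [dotProduct, Fin.repeat_apply]
  exact Fin.sum_modNat fun j => x j * y j

def repeatAppend (t : ℕ) (A : Matrix (Fin k) (Fin m) R) (B : Matrix (Fin k) (Fin n) R) :
    Matrix (Fin k) (Fin (t * m + n)) R :=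
  of fun i => Fin.append (Fin.repeat t (A i)) (B i)

variable (t : ℕ) (A : Matrix (Fin k) (Fin m) R) (B : Matrix (Fin k) (Fin n) R)

theorem vecMul_repeatAppend (v : Fin k → R) :
    v ᵥ* repeatAppend t A B = Fin.append (Fin.repeat t (v ᵥ* A)) (v ᵥ* B) := by
  ext j
  refine Fin.addCases (fun j => ?_) (fun j => ?_) j <;>
    simp [vecMul, dotProduct, repeatAppend, Fin.repeat_apply]

theorem repeatAppend_mul_transpose :
    repeatAppend t A B * (repeatAppend t A B)ᵀ = t • (A * Aᵀ) + B * Bᵀ := by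
  ext i i'
  change Fin.append _ _ ⬝ᵥ Fin.append _ _ = _
  rw [dotProduct_append, dotProduct_repeat]
  rfl

end Concatenation

section GeneratorMatrix

variable {k n : ℕ} (G : Matrix (Fin k) (Fin n) (ZMod 2))

theorem vecMul_eq_zero_of_det_mul_transpose_ne_zero (hG : (G * Gᵀ).det ≠ 0) {v : Fin k → ZMod 2}
    (hv : ∀ w, (v ᵥ* G) ⬝ᵥ (w ᵥ* G) = 0) : v = 0 := by
  by_contra hv0
  refine hG (exists_vecMul_eq_zero_iff.mp ⟨v, hv0, funext fun i => ?_⟩)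
  have h := hv (Pi.single i 1)
  rw [single_one_vecMul] at h
  rwa [← vecMul_vecMul]

theorem finrank_range_vecMulLinear (hG : (G * Gᵀ).det ≠ 0) :
    Module.finrank (ZMod 2) (LinearMap.range G.vecMulLinear) = k := by
  have hinj : Function.Injective G.vecMulLinear := by
    rw [← LinearMap.ker_eq_bot, LinearMap.ker_eq_bot']
    intro v hv
    exact vecMul_eq_zero_of_det_mul_transpose_ne_zero G hG fun w => by
      rw [show v ᵥ* G = 0 from hv, zero_dotProduct]
  rw [LinearMap.finrank_range_of_inj hinj, Module.finrank_fin_fun]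

theorem isLCD_range_vecMulLinear (hG : (G * Gᵀ).det ≠ 0) :
    IsLCD (LinearMap.range G.vecMulLinear) := by
  rw [IsLCD, eq_bot_iff]
  rintro _ ⟨⟨v, rfl⟩, hdual⟩
  rw [Submodule.mem_bot, vecMulLinear_apply,
    vecMul_eq_zero_of_det_mul_transpose_ne_zero G hG fun w => hdual _ ⟨w, rfl⟩, zero_vecMul]

end GeneratorMatrix

theorem minWt_eq_of_forall_le {n d : ℕ} {C : Submodule (ZMod 2) (Fin n → ZMod 2)}
    (hle : ∀ x ∈ C, x ≠ 0 → d ≤ wt x) (hex : ∃ x ∈ C, x ≠ 0 ∧ wt x = d) : minWt C = d := by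
  obtain ⟨x, hxC, hx0, rfl⟩ := hex
  exact le_antisymm (Nat.sInf_le ⟨x, hxC, hx0, rfl⟩)
    (le_csInf ⟨_, x, hxC, hx0, rfl⟩ fun w ⟨y, hyC, hy0, hw⟩ => hw ▸ hle y hyC hy0)

/-- Column `j` is the binary expansion of `j + 1` (the cast `ℕ → ZMod 2` keeps the last bit), so
the columns are all nonzero vectors of `𝔽₂⁴`. -/
def simplex : Matrix (Fin 4) (Fin 15) (ZMod 2) :=
  of fun i j => ((j.val + 1) / 2 ^ i.val : ℕ)

def lcd642 : Matrix (Fin 4) (Fin 6) (ZMod 2) :=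
  !![1, 0, 0, 0, 1, 0; 0, 1, 0, 0, 1, 0; 0, 0, 1, 0, 0, 1; 0, 0, 0, 1, 1, 1]

theorem simplex_mul_transpose : simplex * simplexᵀ = 0 := by decide

theorem wt_vecMul_simplex : ∀ v : Fin 4 → ZMod 2, v ≠ 0 → wt (v ᵥ* simplex) = 8 := by decide

theorem det_lcd642_mul_transpose : (lcd642 * lcd642ᵀ).det ≠ 0 := by decide

theorem two_le_wt_vecMul_lcd642 : ∀ v : Fin 4 → ZMod 2, v ≠ 0 → 2 ≤ wt (v ᵥ* lcd642) := by decide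

theorem exists_wt_vecMul_lcd642_eq_two : ∃ v : Fin 4 → ZMod 2, v ≠ 0 ∧ wt (v ᵥ* lcd642) = 2 := by
  decide

theorem exists_lcd_15t6 (t : ℕ) :
    ∃ C : Submodule (ZMod 2) (Fin (15 * t + 6) → ZMod 2),
      Module.finrank (ZMod 2) C = 4 ∧ IsLCD C ∧ minWt C = 8 * t + 2 := by
  rw [show 15 * t + 6 = t * 15 + 6 by ring]
  set G := repeatAppend t simplex lcd642
  have hG : (G * Gᵀ).det ≠ 0 := by
    rw [repeatAppend_mul_transpose, simplex_mul_transpose, smul_zero, zero_add]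
    exact det_lcd642_mul_transpose
  have hwt : ∀ v, v ≠ 0 → wt (v ᵥ* G) = 8 * t + wt (v ᵥ* lcd642) := fun v hv => by
    rw [vecMul_repeatAppend, wt_append, wt_repeat, wt_vecMul_simplex v hv, mul_comm]
  refine ⟨LinearMap.range G.vecMulLinear, finrank_range_vecMulLinear G hG,
    isLCD_range_vecMulLinear G hG, minWt_eq_of_forall_le ?_ ?_⟩
  · rintro _ ⟨v, rfl⟩ hx
    have hv : v ≠ 0 := by rintro rfl; exact hx (zero_vecMul G)
    rw [vecMulLinear_apply, hwt v hv]
    exact Nat.add_le_add_left (two_le_wt_vecMul_lcd642 v hv) _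
  · obtain ⟨v, hv, hv2⟩ := exists_wt_vecMul_lcd642_eq_two
    have hwt2 : wt (v ᵥ* G) = 8 * t + 2 := by rw [hwt v hv, hv2]
    refine ⟨v ᵥ* G, ⟨v, rfl⟩, ne_of_apply_ne wt ?_, hwt2⟩
    rw [hwt2]
    simp [wt]
end
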